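/- Every locally convex closed preordered space whose topology is locally compact and σ-compact is a convex normally preordered space. -/

import Mathlib

/-!
In a closed preordered space the increasing and decreasing hulls of compact sets are closed, and
a closed set avoiding the decreasing hull of a compact set `X` can be kept off a compact
neighbourhood of `X` (a point not separated by neighbourhoods from a point of `X` lies below
it). With a compact exhaustion this lets one enlarge a closed decreasing set `A` and a closed
increasing set `B`, alternately and by order duality, until every point of either lies in the
interior of a later stage while the two stay disjoint; the unions are the separating open sets.

For convexity at `x`, take a convex neighbourhood `C` of `x` inside a compact set `K₀` and
`W = interior C`, and enlarge `A = ↓x` and `B = ↑x` keeping only `A ∩ B ⊆ W`. This is controlled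
through compact sets `P`, `Q` with `A ⊆ ↓P`, `B ⊆ ↑Q`, `↑Q ∩ A ⊆ W` and `↓P ∩ B ⊆ W`. When `A`
gains the decreasing hull of a compact neighbourhood `F`, the points of `↑Q ∩ ↓F` outside `W` are
sandwiched between two points of `W`, hence form a compact set, and normality removes them.
-/

open Topology

/-- The increasing hull `i(S) = {y | ∃ x ∈ S, x ≤ y}`. -/
def incHull {E : Type*} [Preorder E] (S : Set E) : Set E := {y | ∃ x ∈ S, x ≤ y}

/-- The decreasing hull `d(S) = {y | ∃ x ∈ S, y ≤ x}`. -/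
def decHull {E : Type*} [Preorder E] (S : Set E) : Set E := {y | ∃ x ∈ S, y ≤ x}

/-- A subset `C` is (order) convex if `C = d(C) ∩ i(C)`. -/
def IsOrdConvex {E : Type*} [Preorder E] (C : Set E) : Prop :=
  decHull C ∩ incHull C = C

open Set Filter

section

variable {E : Type*}

section Hulls

variable [Preorder E] {S T : Set E}

theorem subset_incHull (S : Set E) : S ⊆ incHull S := fun y hy => ⟨y, hy, le_rfl⟩

theorem subset_decHull (S : Set E) : S ⊆ decHull S := subset_incHull (E := Eᵒᵈ) S

theorem decHull_union (S T : Set E) : decHull (S ∪ T) = decHull S ∪ decHull T := by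
  ext y
  simp only [decHull, mem_union, mem_ofPred_eq, or_and_right, exists_or]

theorem isUpperSet_incHull (S : Set E) : IsUpperSet (incHull S) :=
  fun _ _ hab ⟨x, hx, hxa⟩ => ⟨x, hx, hxa.trans hab⟩

theorem isLowerSet_decHull (S : Set E) : IsLowerSet (decHull S) := isUpperSet_incHull (E := Eᵒᵈ) S

theorem IsUpperSet.incHull_subset (hT : IsUpperSet T) (h : S ⊆ T) : incHull S ⊆ T :=
  fun _ ⟨_, hx, hxy⟩ => hT hxy (h hx)

theorem IsLowerSet.decHull_subset (hT : IsLowerSet T) (h : S ⊆ T) : decHull S ⊆ T :=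
  IsUpperSet.incHull_subset (E := Eᵒᵈ) hT h

theorem incHull_eq_self_iff : incHull S = S ↔ IsUpperSet S :=
  ⟨fun h => h ▸ isUpperSet_incHull S,
    fun h => (h.incHull_subset subset_rfl).antisymm (subset_incHull S)⟩

theorem decHull_eq_self_iff : decHull S = S ↔ IsLowerSet S := incHull_eq_self_iff (E := Eᵒᵈ)

theorem IsOrdConvex.ordConnected (hS : IsOrdConvex S) : S.OrdConnected :=
  ⟨fun a ha b hb _ hz => hS.subset ⟨⟨b, hb, hz.2⟩, a, ha, hz.1⟩⟩

end Hulls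

instance [TopologicalSpace E] [h : WeaklyLocallyCompactSpace E] :
    WeaklyLocallyCompactSpace Eᵒᵈ := h

instance [TopologicalSpace E] [h : SigmaCompactSpace E] : SigmaCompactSpace Eᵒᵈ := h

section OrderClosed

variable [TopologicalSpace E] [Preorder E] [OrderClosedTopology E]

theorem IsCompact.isClosed_incHull {K : Set E} (hK : IsCompact K) : IsClosed (incHull K) := by
  refine isOpen_compl_iff.1 (isOpen_iff_mem_nhds.2 fun y hy => ?_)
  have hKy : K ×ˢ {y} ⊆ {p : E × E | p.1 ≤ p.2}ᶜ := by
    rintro ⟨k, _⟩ ⟨hk, rfl⟩ hky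
    exact hy ⟨k, hk, hky⟩
  obtain ⟨u, v, -, hv, hKu, hyv, huv⟩ :=
    generalized_tube_lemma hK isCompact_singleton isClosed_le_prod.isOpen_compl hKy
  exact mem_of_superset (hv.mem_nhds (hyv rfl)) fun w hw ⟨k, hk, hkw⟩ =>
    huv (show (k, w) ∈ u ×ˢ v from ⟨hKu hk, hw⟩) hkw

theorem IsCompact.isClosed_decHull {K : Set E} (hK : IsCompact K) : IsClosed (decHull K) :=
  IsCompact.isClosed_incHull (E := Eᵒᵈ) hK

theorem le_of_not_disjoint_nhds {a b : E} (h : ¬Disjoint (𝓝 a) (𝓝 b)) : a ≤ b :=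
  haveI : NeBot (𝓝 a ⊓ 𝓝 b) := ⟨fun hbot => h (disjoint_iff.2 hbot)⟩
  le_of_tendsto_of_tendsto' (tendsto_id'.2 inf_le_left) (tendsto_id'.2 inf_le_right)
    fun _ => le_rfl

variable [WeaklyLocallyCompactSpace E]

/-- Replaces regularity, which a closed preordered space need not have. -/
theorem exists_compact_superset_disjoint_of_disjoint_decHull {X M : Set E} (hX : IsCompact X)
    (hM : IsClosed M) (h : Disjoint M (decHull X)) :
    ∃ F, IsCompact F ∧ X ⊆ interior F ∧ Disjoint M F := by
  obtain ⟨K, hK, hXK⟩ := exists_compact_superset hX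
  have hKM : IsCompact (K ∩ M) := hK.inter_right hM
  have hsep : Disjoint (𝓝ˢ (K ∩ M)) (𝓝ˢ X) := by
    refine hKM.disjoint_nhdsSet_left.2 fun m hm => hX.disjoint_nhdsSet_right.2 fun x hx => ?_
    by_contra hmx
    exact disjoint_left.1 h hm.2 ⟨x, hx, le_of_not_disjoint_nhds hmx⟩
  obtain ⟨V, ⟨hV, hKMV⟩, U, ⟨hU, hXU⟩, hVU⟩ :=
    ((hasBasis_nhdsSet _).disjoint_iff (hasBasis_nhdsSet _)).1 hsep
  refine ⟨K ∩ closure U, hK.inter_right isClosed_closure, ?_, ?_⟩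
  · have hXKU : X ⊆ interior K ∩ U := fun x hx => ⟨hXK hx, hXU hx⟩
    exact hXKU.trans ((isOpen_interior.inter hU).subset_interior_iff.2
      (inter_subset_inter interior_subset subset_closure))
  · exact disjoint_left.2 fun m hm hmF =>
      disjoint_left.1 (hVU.closure_right hV) (hKMV ⟨hmF.1, hm⟩) hmF.2

theorem exists_grow_lower_disjoint {A B K : Set E} (hA : IsClosed A) (hAl : IsLowerSet A)
    (hB : IsClosed B) (hBu : IsUpperSet B) (hAB : Disjoint A B) (hK : IsCompact K) :
    ∃ A', IsClosed A' ∧ IsLowerSet A' ∧ A ⊆ A' ∧ A ∩ K ⊆ interior A' ∧ Disjoint A' B := by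
  obtain ⟨F, hF, hAKF, hBF⟩ := exists_compact_superset_disjoint_of_disjoint_decHull
    (hK.inter_left hA) hB (hAB.symm.mono_right (hAl.decHull_subset inter_subset_left))
  refine ⟨A ∪ decHull F, hA.union hF.isClosed_decHull, hAl.union (isLowerSet_decHull F),
    subset_union_left, hAKF.trans (interior_mono ((subset_decHull F).trans subset_union_right)),
    disjoint_union_left.2 ⟨hAB, disjoint_left.2 ?_⟩⟩
  rintro z ⟨f, hf, hzf⟩ hzB
  exact disjoint_left.1 hBF (hBu hzf hzB) hf

theorem exists_grow_disjoint {A B K : Set E} (hA : IsClosed A) (hAl : IsLowerSet A)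
    (hB : IsClosed B) (hBu : IsUpperSet B) (hAB : Disjoint A B) (hK : IsCompact K) :
    ∃ A' B', (IsClosed A' ∧ IsLowerSet A' ∧ IsClosed B' ∧ IsUpperSet B' ∧ Disjoint A' B') ∧
      A ⊆ A' ∧ B ⊆ B' ∧ A ∩ K ⊆ interior A' ∧ B ∩ K ⊆ interior B' := by
  obtain ⟨A', hA', hA'l, hAA', hAK, hA'B⟩ := exists_grow_lower_disjoint hA hAl hB hBu hAB hK
  obtain ⟨B', hB', hB'u, hBB', hBK, hB'A'⟩ :=
    exists_grow_lower_disjoint (E := Eᵒᵈ) hB hBu hA' hA'l hA'B.symm hK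
  exact ⟨A', B', ⟨hA', hA'l, hB', hB'u, hB'A'.symm⟩, hAA', hBB', hAK, hBK⟩

end OrderClosed

section Exhaustion

variable [TopologicalSpace E] [SigmaCompactSpace E]

theorem isOpen_iUnion_of_inter_compactCovering_subset {S : ℕ → Set E} (hS : Monotone S)
    (h : ∀ n, S n ∩ compactCovering E n ⊆ interior (S (n + 1))) : IsOpen (⋃ n, S n) := by
  refine isOpen_iff_mem_nhds.2 fun z hz => ?_
  obtain ⟨n, hn⟩ := mem_iUnion.1 hz
  obtain ⟨m, hm⟩ := exists_mem_compactCovering z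
  have hz' : z ∈ interior (S (max n m + 1)) :=
    h _ ⟨hS (le_max_left n m) hn, compactCovering_subset E (le_max_right n m) hm⟩
  exact mem_of_superset (mem_interior_iff_mem_nhds.1 hz') (subset_iUnion S _)

theorem exists_monotone_seq_isOpen_iUnion {p : Set E → Set E → Prop}
    (step : ∀ A B, p A B → ∀ K, IsCompact K → ∃ A' B', p A' B' ∧
      A ⊆ A' ∧ B ⊆ B' ∧ A ∩ K ⊆ interior A' ∧ B ∩ K ⊆ interior B')
    {A₀ B₀ : Set E} (h₀ : p A₀ B₀) :
    ∃ A B : ℕ → Set E, A 0 = A₀ ∧ B 0 = B₀ ∧ (∀ n, p (A n) (B n)) ∧ Monotone A ∧ Monotone B ∧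
      IsOpen (⋃ n, A n) ∧ IsOpen (⋃ n, B n) := by
  choose! A' B' hp hA hB hAK hBK using step
  let s : ℕ → Set E × Set E := fun n => Nat.rec (A₀, B₀)
    (fun n s => (A' s.1 s.2 (compactCovering E n), B' s.1 s.2 (compactCovering E n))) n
  have hK := isCompact_compactCovering E
  have hs : ∀ n, p (s n).1 (s n).2 := fun n => Nat.rec h₀ (fun n ih => hp _ _ ih _ (hK n)) n
  have hAm : Monotone fun n => (s n).1 := monotone_nat_of_le_succ fun n => hA _ _ (hs n) _ (hK n)
  have hBm : Monotone fun n => (s n).2 := monotone_nat_of_le_succ fun n => hB _ _ (hs n) _ (hK n)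
  exact ⟨fun n => (s n).1, fun n => (s n).2, rfl, rfl, hs, hAm, hBm,
    isOpen_iUnion_of_inter_compactCovering_subset hAm fun n => hAK _ _ (hs n) _ (hK n),
    isOpen_iUnion_of_inter_compactCovering_subset hBm fun n => hBK _ _ (hs n) _ (hK n)⟩

end Exhaustion

section Dominated

variable [TopologicalSpace E] [Preorder E] {W A B P Q K₀ : Set E}

structure IsDominatedPair (W A B P Q : Set E) : Prop where
  isClosed_left : IsClosed A
  isLowerSet_left : IsLowerSet A
  isClosed_right : IsClosed B
  isUpperSet_right : IsUpperSet B
  isCompact_left : IsCompact P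
  isCompact_right : IsCompact Q
  left_subset_decHull : A ⊆ decHull P
  right_subset_incHull : B ⊆ incHull Q
  incHull_inter_left_subset : incHull Q ∩ A ⊆ W
  decHull_inter_right_subset : decHull P ∩ B ⊆ W

theorem isDominatedPair_dual_iff :
    IsDominatedPair (E := Eᵒᵈ) W B A Q P ↔ IsDominatedPair W A B P Q :=
  ⟨fun h => ⟨h.3, h.4, h.1, h.2, h.6, h.5, h.8, h.7, h.10, h.9⟩,
    fun h => ⟨h.3, h.4, h.1, h.2, h.6, h.5, h.8, h.7, h.10, h.9⟩⟩

theorem IsDominatedPair.inter_subset (h : IsDominatedPair W A B P Q) : A ∩ B ⊆ W :=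
  fun _ hz => h.incHull_inter_left_subset ⟨h.right_subset_incHull hz.2, hz.1⟩

variable [OrderClosedTopology E] [WeaklyLocallyCompactSpace E]

theorem IsDominatedPair.exists_compact_witness (h : IsDominatedPair W A B P Q) (hW : IsOpen W)
    (hK₀ : IsCompact K₀) (hWK : ∀ a ∈ W, ∀ b ∈ W, Icc a b ⊆ K₀) {X : Set E} (hX : IsCompact X)
    (hXA : X ⊆ A) :
    ∃ F, IsCompact F ∧ X ⊆ interior F ∧ (∀ q ∈ Q, ∀ f ∈ F, q ≤ f → q ∈ W ∧ f ∈ W) ∧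
      decHull F ∩ B ⊆ W := by
  set Y := Q ∪ (K₀ ∩ B)
  have hY : IsCompact Y := h.isCompact_right.union (hK₀.inter_right h.isClosed_right)
  have hYQ : incHull Y ⊆ incHull Q := (isUpperSet_incHull Q).incHull_subset
    (union_subset (subset_incHull Q) (inter_subset_right.trans h.right_subset_incHull))
  -- `M` collects the upper ends of the pairs `a ≤ f`, `a ∈ Y`, that leave `W`
  set M := incHull (Y \ W) ∪ (incHull Y \ W)
  have hM : IsClosed M := (hY.diff hW).isClosed_incHull.union (hY.isClosed_incHull.sdiff hW)
  have hMX : Disjoint M (decHull X) := by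
    refine disjoint_left.2 fun f hfM hfX => ?_
    have hfA : f ∈ A := h.isLowerSet_left.decHull_subset hXA hfX
    rcases hfM with ⟨a, ⟨haY, haW⟩, haf⟩ | ⟨hfY, hfW⟩
    · exact haW (h.incHull_inter_left_subset ⟨hYQ ⟨a, haY, le_rfl⟩, h.isLowerSet_left haf hfA⟩)
    · exact hfW (h.incHull_inter_left_subset ⟨hYQ hfY, hfA⟩)
  obtain ⟨F, hF, hXF, hMF⟩ := exists_compact_superset_disjoint_of_disjoint_decHull hX hM hMX
  have hYF : ∀ a ∈ Y, ∀ f ∈ F, a ≤ f → a ∈ W ∧ f ∈ W := by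
    intro a ha f hf haf
    by_contra hout
    refine disjoint_left.1 hMF ?_ hf
    rcases not_and_or.1 hout with haW | hfW
    exacts [Or.inl ⟨a, ⟨ha, haW⟩, haf⟩, Or.inr ⟨⟨a, ha, haf⟩, hfW⟩]
  refine ⟨F, hF, hXF, fun q hq => hYF q (Or.inl hq), ?_⟩
  rintro z ⟨⟨f, hf, hzf⟩, hzB⟩
  obtain ⟨q, hq, hqz⟩ := h.right_subset_incHull hzB
  obtain ⟨hqW, hfW⟩ := hYF q (Or.inl hq) f hf (hqz.trans hzf)
  exact (hYF z (Or.inr ⟨hWK q hqW f hfW ⟨hqz, hzf⟩, hzB⟩) f hf hzf).1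

end Dominated

variable [TopologicalSpace E] [Preorder E] [OrderClosedTopology E] [WeaklyLocallyCompactSpace E]
  [SigmaCompactSpace E] {W A B P Q K₀ : Set E}

theorem exists_isOpen_isLowerSet_isUpperSet_disjoint (hA : IsClosed A) (hAl : IsLowerSet A)
    (hB : IsClosed B) (hBu : IsUpperSet B) (hAB : Disjoint A B) :
    ∃ U V, IsOpen U ∧ IsLowerSet U ∧ IsOpen V ∧ IsUpperSet V ∧ A ⊆ U ∧ B ⊆ V ∧ Disjoint U V := by
  obtain ⟨Aₙ, Bₙ, rfl, rfl, hAB, hAm, hBm, hU, hV⟩ := exists_monotone_seq_isOpen_iUnion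
    (p := fun A B => IsClosed A ∧ IsLowerSet A ∧ IsClosed B ∧ IsUpperSet B ∧ Disjoint A B)
    (fun _ _ h _ hK => exists_grow_disjoint h.1 h.2.1 h.2.2.1 h.2.2.2.1 h.2.2.2.2 hK)
    ⟨hA, hAl, hB, hBu, hAB⟩
  refine ⟨⋃ n, Aₙ n, ⋃ n, Bₙ n, hU, isLowerSet_iUnion fun n => (hAB n).2.1, hV,
    isUpperSet_iUnion fun n => (hAB n).2.2.2.1, subset_iUnion Aₙ 0, subset_iUnion Bₙ 0, ?_⟩
  rw [disjoint_iff_inter_eq_empty, ← iUnion_inter_of_monotone hAm hBm]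
  exact iUnion_eq_empty.2 fun n => (hAB n).2.2.2.2.inter_eq

theorem IsDominatedPair.exists_grow_of_witness (h : IsDominatedPair W A B P Q) (hW : IsOpen W)
    (hK₀ : IsCompact K₀) (hWK : ∀ a ∈ W, ∀ b ∈ W, Icc a b ⊆ K₀) {F : Set E} (hF : IsCompact F)
    (hQF : ∀ q ∈ Q, ∀ f ∈ F, q ≤ f → q ∈ W ∧ f ∈ W) (hFB : decHull F ∩ B ⊆ W) :
    ∃ A', IsDominatedPair W A' B (P ∪ F) Q ∧ A ⊆ A' ∧ A ∩ interior F ⊆ interior A' := by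
  -- the part of `↓F` that would break `↑Q ∩ A' ⊆ W`; it lies in the compact hull of `W`
  set N := (incHull Q ∩ decHull F) \ W
  have hN : IsCompact N := by
    refine hK₀.of_isClosed_subset
      ((h.isCompact_right.isClosed_incHull.inter hF.isClosed_decHull).sdiff hW) ?_
    rintro z ⟨⟨⟨q, hq, hqz⟩, f, hf, hzf⟩, -⟩
    obtain ⟨hqW, hfW⟩ := hQF q hq f hf (hqz.trans hzf)
    exact hWK q hqW f hfW ⟨hqz, hzf⟩
  have hAN : Disjoint A (incHull N) := by
    refine disjoint_left.2 fun z hzA ⟨n, hn, hnz⟩ => hn.2 ?_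
    exact h.incHull_inter_left_subset ⟨hn.1.1, h.isLowerSet_left hnz hzA⟩
  obtain ⟨U, V, hU, -, hV, hVu, hAU, hNV, hUV⟩ :=
    exists_isOpen_isLowerSet_isUpperSet_disjoint h.isClosed_left h.isLowerSet_left
      hN.isClosed_incHull (isUpperSet_incHull N) hAN
  refine ⟨A ∪ (decHull F \ V), ⟨h.isClosed_left.union (hF.isClosed_decHull.sdiff hV),
    h.isLowerSet_left.union ((isLowerSet_decHull F).inter hVu.compl), h.isClosed_right,
    h.isUpperSet_right, h.isCompact_left.union hF, h.isCompact_right, ?_,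
    h.right_subset_incHull, ?_, ?_⟩, subset_union_left, ?_⟩
  · rw [decHull_union]
    exact union_subset_union h.left_subset_decHull sdiff_subset
  · rintro z ⟨hzQ, hzA | ⟨hzF, hzV⟩⟩
    · exact h.incHull_inter_left_subset ⟨hzQ, hzA⟩
    · by_contra hzW
      exact hzV (hNV (subset_incHull N ⟨⟨hzQ, hzF⟩, hzW⟩))
  · rw [decHull_union]
    rintro z ⟨hzP | hzF, hzB⟩
    exacts [h.decHull_inter_right_subset ⟨hzP, hzB⟩, hFB ⟨hzF, hzB⟩]
  · have hAUF : A ∩ interior F ⊆ U ∩ interior F := inter_subset_inter_left _ hAU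
    refine hAUF.trans ((hU.inter isOpen_interior).subset_interior_iff.2 ?_)
    exact fun w hw => Or.inr ⟨subset_decHull F (interior_subset hw.2),
      disjoint_left.1 hUV hw.1⟩

theorem IsDominatedPair.exists_grow_left (h : IsDominatedPair W A B P Q) (hW : IsOpen W)
    (hK₀ : IsCompact K₀) (hWK : ∀ a ∈ W, ∀ b ∈ W, Icc a b ⊆ K₀) {K : Set E} (hK : IsCompact K) :
    ∃ A' P', IsDominatedPair W A' B P' Q ∧ A ⊆ A' ∧ A ∩ K ⊆ interior A' := by
  obtain ⟨F, hF, hAKF, hQF, hFB⟩ :=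
    h.exists_compact_witness hW hK₀ hWK (hK.inter_left h.isClosed_left) inter_subset_left
  obtain ⟨A', hA', hAA', hAF⟩ := h.exists_grow_of_witness hW hK₀ hWK hF hQF hFB
  exact ⟨A', P ∪ F, hA', hAA', fun z hz => hAF ⟨hz.1, hAKF hz⟩⟩

theorem IsDominatedPair.exists_grow (h : IsDominatedPair W A B P Q) (hW : IsOpen W)
    (hK₀ : IsCompact K₀) (hWK : ∀ a ∈ W, ∀ b ∈ W, Icc a b ⊆ K₀) {K : Set E} (hK : IsCompact K) :
    ∃ A' B', (∃ P' Q', IsDominatedPair W A' B' P' Q') ∧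
      A ⊆ A' ∧ B ⊆ B' ∧ A ∩ K ⊆ interior A' ∧ B ∩ K ⊆ interior B' := by
  obtain ⟨A', P', h', hAA', hAK⟩ := h.exists_grow_left hW hK₀ hWK hK
  obtain ⟨B', Q', h'', hBB', hBK⟩ := (isDominatedPair_dual_iff.2 h').exists_grow_left hW hK₀
    (fun a ha b hb _ hz => hWK b hb a ha ⟨hz.2, hz.1⟩) hK
  exact ⟨A', B', ⟨P', Q', isDominatedPair_dual_iff.1 h''⟩, hAA', hBB', hAK, hBK⟩

theorem exists_isOpen_isLowerSet_isUpperSet_inter_subset (hW : IsOpen W) (hK₀ : IsCompact K₀)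
    (hWK : ∀ a ∈ W, ∀ b ∈ W, Icc a b ⊆ K₀) {x : E} (hx : Icc x x ⊆ W) :
    ∃ U V, IsOpen U ∧ IsLowerSet U ∧ IsOpen V ∧ IsUpperSet V ∧ x ∈ U ∩ V ∧ U ∩ V ⊆ W := by
  have h₀ : IsDominatedPair W (decHull {x}) (incHull {x}) {x} {x} := by
    refine ⟨isCompact_singleton.isClosed_decHull, isLowerSet_decHull _,
      isCompact_singleton.isClosed_incHull, isUpperSet_incHull _, isCompact_singleton,
      isCompact_singleton, subset_rfl, subset_rfl, ?_, ?_⟩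
    · rintro z ⟨⟨_, rfl, hxz⟩, _, rfl, hzx⟩
      exact hx ⟨hxz, hzx⟩
    · rintro z ⟨⟨_, rfl, hzx⟩, _, rfl, hxz⟩
      exact hx ⟨hxz, hzx⟩
  obtain ⟨Aₙ, Bₙ, hA₀, hB₀, hAB, hAm, hBm, hU, hV⟩ := exists_monotone_seq_isOpen_iUnion
    (p := fun A B => ∃ P Q, IsDominatedPair W A B P Q)
    (fun _ _ ⟨_, _, h⟩ _ hK => h.exists_grow hW hK₀ hWK hK) ⟨_, _, h₀⟩
  choose P Q hPQ using hAB
  refine ⟨⋃ n, Aₙ n, ⋃ n, Bₙ n, hU, isLowerSet_iUnion fun n => (hPQ n).isLowerSet_left, hV,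
    isUpperSet_iUnion fun n => (hPQ n).isUpperSet_right,
    ⟨mem_iUnion_of_mem 0 (hA₀ ▸ subset_decHull _ rfl),
      mem_iUnion_of_mem 0 (hB₀ ▸ subset_incHull _ rfl)⟩, ?_⟩
  rw [← iUnion_inter_of_monotone hAm hBm]
  exact iUnion_subset fun n => (hPQ n).inter_subset

theorem exists_isOpen_isLowerSet_isUpperSet_inter_subset_of_ordConnected_nhds
    (hlc : ∀ x : E, ∀ O ∈ 𝓝 x, ∃ C ∈ 𝓝 x, C.OrdConnected ∧ C ⊆ O) {x : E} {O : Set E}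
    (hO : O ∈ 𝓝 x) :
    ∃ U V, IsOpen U ∧ IsLowerSet U ∧ IsOpen V ∧ IsUpperSet V ∧ x ∈ U ∩ V ∧ U ∩ V ⊆ O := by
  obtain ⟨K₀, hK₀, hK₀x⟩ := exists_compact_mem_nhds x
  obtain ⟨C, hCx, hC, hCO⟩ := hlc x _ (inter_mem hO hK₀x)
  obtain ⟨C', hC'x, hC', hC'C⟩ := hlc x _ (interior_mem_nhds.2 hCx)
  have hWK : ∀ a ∈ interior C, ∀ b ∈ interior C, Icc a b ⊆ K₀ := fun a ha b hb =>
    (hC.out (interior_subset ha) (interior_subset hb)).trans fun _ hz => (hCO hz).2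
  obtain ⟨U, V, hU, hUl, hV, hVu, hxUV, hUVW⟩ := exists_isOpen_isLowerSet_isUpperSet_inter_subset
    isOpen_interior hK₀ hWK ((hC'.out (mem_of_mem_nhds hC'x) (mem_of_mem_nhds hC'x)).trans hC'C)
  exact ⟨U, V, hU, hUl, hV, hVu, hxUV, hUVW.trans (interior_subset.trans fun _ hz => (hCO hz).1)⟩

end

/-- Every locally convex closed preordered space whose topology is locally
compact and σ-compact is a convex normally preordered space. -/
theorem convex_normallyPreordered_of_locallyConvex {E : Type*} [TopologicalSpace E]
    [Preorder E]
    (hG : IsClosed {p : E × E | p.1 ≤ p.2})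
    (hloc : ∀ x : E, ∃ K : Set E, IsCompact K ∧ K ∈ 𝓝 x)
    (hsigma : ∃ K : ℕ → Set E, (∀ n, IsCompact (K n)) ∧ (⋃ n, K n) = Set.univ)
    (hlc : ∀ x : E, ∀ O ∈ 𝓝 x, ∃ C ∈ 𝓝 x, IsOrdConvex C ∧ C ⊆ O) :
    (∀ x : E, ∀ O : Set E, IsOpen O → x ∈ O →
      ∃ U V : Set E, IsOpen U ∧ decHull U = U ∧ IsOpen V ∧ incHull V = V ∧
        x ∈ U ∩ V ∧ U ∩ V ⊆ O) ∧
    (∀ x : E, IsClosed (incHull {x}) ∧ IsClosed (decHull {x})) ∧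
    (∀ A B : Set E, IsClosed A → decHull A = A → IsClosed B → incHull B = B →
      A ∩ B = ∅ →
      ∃ U V : Set E, IsOpen U ∧ decHull U = U ∧ IsOpen V ∧ incHull V = V ∧
        A ⊆ U ∧ B ⊆ V ∧ U ∩ V = ∅) := by
  have : OrderClosedTopology E := ⟨hG⟩
  have : WeaklyLocallyCompactSpace E := ⟨hloc⟩
  have : SigmaCompactSpace E := SigmaCompactSpace_iff_exists_compact_covering.2 hsigma
  have hlc' : ∀ x : E, ∀ O ∈ 𝓝 x, ∃ C ∈ 𝓝 x, C.OrdConnected ∧ C ⊆ O := fun x O hO =>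
    (hlc x O hO).imp fun _ ⟨hCx, hC, hCO⟩ => ⟨hCx, hC.ordConnected, hCO⟩
  refine ⟨fun x O hO hxO => ?_,
    fun x => ⟨isCompact_singleton.isClosed_incHull, isCompact_singleton.isClosed_decHull⟩,
    fun A B hA hAl hB hBu hAB => ?_⟩
  · obtain ⟨U, V, hU, hUl, hV, hVu, hxUV, hUVO⟩ :=
      exists_isOpen_isLowerSet_isUpperSet_inter_subset_of_ordConnected_nhds hlc'
        (hO.mem_nhds hxO)
    exact ⟨U, V, hU, decHull_eq_self_iff.2 hUl, hV, incHull_eq_self_iff.2 hVu, hxUV, hUVO⟩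
  · obtain ⟨U, V, hU, hUl, hV, hVu, hAU, hBV, hUV⟩ :=
      exists_isOpen_isLowerSet_isUpperSet_disjoint hA (decHull_eq_self_iff.1 hAl) hB
        (incHull_eq_self_iff.1 hBu) (disjoint_iff_inter_eq_empty.2 hAB)
    exact ⟨U, V, hU, decHull_eq_self_iff.2 hUl, hV, incHull_eq_self_iff.2 hVu, hAU, hBV,
      disjoint_iff_inter_eq_empty.1 hUV⟩
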